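/- Let S, T > 0 and 0 < ε₀ < min(S,T). Let ρ, a : [0,S] → ℝ be continuous, with ρ C¹ on (0,S), a C¹ on (0,S), ρ(0) = 0, ρ(s) > 0 for s ∈ (0,S], and a(s) > 0 for s ∈ (0,S]. Let w : [0,S] × (0,T] → ℝ be continuous and bounded, such that ∂ₛw and ∂ₜw exist, are continuous and bounded on [0,S] × (0,T], w is twice continuously differentiable in s on (0,S) × (0,T], and ρ(s)·∂ₜw(s,t) = (ρ·a)'(s)·∂ₛw(s,t) + ρ(s)·a(s)·∂ₛ²w(s,t) for all (s,t) ∈ (0,S) × (0,T]. Assume: (i) w(s,t) ≤ 0 for all (s,t) ∈ [0,ε₀] × (0,ε₀]; (ii) w(S,t) ≤ 0 for all t ∈ (0,T]; (iii) w(s,t) → 0 as t → 0⁺, uniformly for s ∈ [ε₀,S]. Then w(s,t) ≤ 0 for all (s,t) ∈ [0,S] × (0,T]. -/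

import Mathlib

/-!
Penalize: for small `τ > 0` and `δ > 0`, let `(s₀, t₀)` maximize `w - δ (t - τ)` over
`[0, S] × [τ, T]`. If the maximum exceeds the bound `M` of `w` on the parabolic boundary
`{t = τ} ∪ {s = S}`, then `t₀ > τ` and `s₀ < S`, so `∂ₜw(s₀, t₀) ≥ δ > 0`. The flux
`F = ρ a ∂ₛw` of the slice `w(·, t₀)` then has `F' = ρ ∂ₜw > 0` just right of `s₀`, while
`F → 0` at `s₀⁺`: at `s₀ = 0` because `ρ(0) = 0` and `∂ₛw` is bounded, at `s₀ > 0` because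
`∂ₛw(s₀) = 0`. So `∂ₛw > 0` right of `s₀`, contradicting maximality. Letting `δ → 0` gives
`w ≤ M`, and by (i) and (iii) `M` can be taken arbitrarily small by choosing `τ` small.
-/

open Set Filter Topology

theorem HasDerivWithinAt.nonneg_of_isMaxOn_Ioo {f : ℝ → ℝ} {f' τ t₀ : ℝ}
    (hf : HasDerivWithinAt f f' (Ioo τ t₀) t₀) (hτ : τ < t₀) (hmax : IsMaxOn f (Ioo τ t₀) t₀) :
    0 ≤ f' := by
  have hslope := hasDerivWithinAt_iff_tendsto_slope.mp hf
  rw [sdiff_singleton_eq_self fun h => lt_irrefl _ h.2, nhdsWithin_Ioo_eq_nhdsLT hτ] at hslope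
  refine ge_of_tendsto hslope ?_
  filter_upwards [Ioo_mem_nhdsLT hτ] with t ht
  rw [slope_def_field]
  exact div_nonneg_of_nonpos (sub_nonpos.mpr (hmax ht)) (sub_nonpos.mpr ht.2.le)

theorem StrictMonoOn.pos_of_tendsto_nhdsGT {f : ℝ → ℝ} {a b : ℝ}
    (hf : StrictMonoOn f (Ioc a b)) (hlim : Tendsto f (𝓝[>] a) (𝓝 0)) :
    ∀ x ∈ Ioc a b, 0 < f x := by
  intro x hx
  have hm : (a + x) / 2 ∈ Ioc a b := ⟨by linarith [hx.1], by linarith [hx.1, hx.2]⟩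
  have hm_nonneg : 0 ≤ f ((a + x) / 2) := by
    refine le_of_tendsto hlim ?_
    filter_upwards [Ioo_mem_nhdsGT hm.1] with y hy
    exact (hf ⟨hy.1, hy.2.le.trans hm.2⟩ hm hy.2).le
  exact hm_nonneg.trans_lt (hf hm hx (by linarith [hx.1]))

structure DegenerateCoefficients (S : ℝ) (ρ a : ℝ → ℝ) : Prop where
  weight_zero : ρ 0 = 0
  continuousWithinAt_weight : ContinuousWithinAt ρ (Ioi 0) 0
  continuousWithinAt_coeff : ContinuousWithinAt a (Ioi 0) 0
  contDiffOn_weight : ContDiffOn ℝ 1 ρ (Ioo 0 S)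
  contDiffOn_coeff : ContDiffOn ℝ 1 a (Ioo 0 S)
  weight_pos : ∀ s ∈ Ioo 0 S, 0 < ρ s
  coeff_pos : ∀ s ∈ Ioo 0 S, 0 < a s

namespace DegenerateCoefficients

variable {S : ℝ} {ρ a f : ℝ → ℝ}

theorem hasDerivAt_flux (hc : DegenerateCoefficients S ρ a) (hf : ContDiffOn ℝ 2 f (Ioo 0 S))
    {x : ℝ} (hx : x ∈ Ioo 0 S) :
    HasDerivAt (fun y => ρ y * a y * deriv f y)
      (deriv (fun y => ρ y * a y) x * deriv f x + ρ x * a x * deriv (deriv f) x) x := by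
  have hxU : Ioo 0 S ∈ 𝓝 x := isOpen_Ioo.mem_nhds hx
  have hρ := (hc.contDiffOn_weight.differentiableOn one_ne_zero).differentiableAt hxU
  have ha := (hc.contDiffOn_coeff.differentiableOn one_ne_zero).differentiableAt hxU
  have hf' := ((hf.deriv_of_isOpen (m := 1) isOpen_Ioo (by norm_num)).differentiableOn
    one_ne_zero).differentiableAt hxU
  exact (hρ.mul ha).hasDerivAt.mul hf'.hasDerivAt

theorem tendsto_flux_nhdsGT (hc : DegenerateCoefficients S ρ a) {s₀ : ℝ} (hs₀ : s₀ ∈ Ico 0 S)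
    (hf : ContDiffOn ℝ 2 f (Ioo 0 S))
    (hf'bdd : IsBoundedUnder (· ≤ ·) (𝓝[>] 0) (norm ∘ deriv f))
    (hmax : IsMaxOn f (Icc 0 S) s₀) :
    Tendsto (fun x => ρ x * a x * deriv f x) (𝓝[>] s₀) (𝓝 0) := by
  rcases hs₀.1.eq_or_lt with rfl | hpos
  · have hρ := hc.continuousWithinAt_weight.tendsto
    rw [hc.weight_zero] at hρ
    exact (hρ.zero_mul_isBoundedUnder_le
      hc.continuousWithinAt_coeff.tendsto.norm.isBoundedUnder_le).zero_mul_isBoundedUnder_le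
      hf'bdd
  · have hf'₀ : deriv f s₀ = 0 := (hmax.isLocalMax (Icc_mem_nhds hpos hs₀.2)).deriv_eq_zero
    have hF := (hc.hasDerivAt_flux hf ⟨hpos, hs₀.2⟩).continuousAt.tendsto
    rw [hf'₀, mul_zero] at hF
    exact hF.mono_left nhdsWithin_le_nhds

theorem not_isMaxOn_of_flux_deriv_pos (hc : DegenerateCoefficients S ρ a) {g : ℝ → ℝ}
    {s₀ : ℝ} (hs₀ : s₀ ∈ Ico 0 S) (hf : ContinuousOn f (Icc 0 S))
    (hf2 : ContDiffOn ℝ 2 f (Ioo 0 S))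
    (hf'bdd : IsBoundedUnder (· ≤ ·) (𝓝[>] 0) (norm ∘ deriv f))
    (heq : ∀ x ∈ Ioo 0 S, ρ x * g x
      = deriv (fun y => ρ y * a y) x * deriv f x + ρ x * a x * deriv (deriv f) x)
    (hg : ContinuousWithinAt g (Icc 0 S) s₀) (hg₀ : 0 < g s₀) :
    ¬ IsMaxOn f (Icc 0 S) s₀ := by
  intro hmax
  have hev : Ioo 0 S ∩ {x | 0 < g x} ∈ 𝓝[>] s₀ := inter_mem (Ioo_mem_nhdsGT_of_mem hs₀)
    (nhdsWithin_le_of_mem (Icc_mem_nhdsGT_of_mem hs₀) (hg.eventually (eventually_gt_nhds hg₀)))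
  obtain ⟨u, hu : s₀ < u, hsub⟩ := mem_nhdsGT_iff_exists_Ioo_subset.mp hev
  obtain ⟨σ, hσ₀, hσu⟩ := exists_between hu
  have hI : ∀ x ∈ Ioc s₀ σ, x ∈ Ioo 0 S ∧ 0 < g x := fun x hx => hsub ⟨hx.1, hx.2.trans_lt hσu⟩
  set F := fun x => ρ x * a x * deriv f x
  have hFderiv : ∀ x ∈ Ioc s₀ σ, HasDerivAt F (ρ x * g x) x := fun x hx =>
    heq x (hI x hx).1 ▸ hc.hasDerivAt_flux hf2 (hI x hx).1
  have hFmono : StrictMonoOn F (Ioc s₀ σ) := by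
    refine strictMonoOn_of_deriv_pos (convex_Ioc s₀ σ)
      (fun x hx => (hFderiv x hx).continuousAt.continuousWithinAt) fun x hx => ?_
    rw [interior_Ioc] at hx
    have hx' : x ∈ Ioc s₀ σ := Ioo_subset_Ioc_self hx
    rw [(hFderiv x hx').deriv]
    exact mul_pos (hc.weight_pos x (hI x hx').1) (hI x hx').2
  have hFpos := hFmono.pos_of_tendsto_nhdsGT (hc.tendsto_flux_nhdsGT hs₀ hf2 hf'bdd hmax)
  have hfmono : StrictMonoOn f (Icc s₀ σ) := by
    refine strictMonoOn_of_deriv_pos (convex_Icc s₀ σ)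
      (hf.mono (Icc_subset_Icc hs₀.1 (hI σ ⟨hσ₀, le_rfl⟩).1.2.le)) fun x hx => ?_
    rw [interior_Icc] at hx
    have hx' : x ∈ Ioc s₀ σ := Ioo_subset_Ioc_self hx
    have hρa : 0 < ρ x * a x :=
      mul_pos (hc.weight_pos x (hI x hx').1) (hc.coeff_pos x (hI x hx').1)
    exact pos_of_mul_pos_right (hFpos x hx') hρa.le
  have hσS : σ ∈ Icc 0 S := Ioo_subset_Icc_self (hI σ ⟨hσ₀, le_rfl⟩).1
  exact (hfmono ⟨le_rfl, hσ₀.le⟩ ⟨hσ₀.le, le_rfl⟩ hσ₀).not_ge (hmax hσS)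

end DegenerateCoefficients

theorem isBoundedUnder_norm_deriv_nhdsGT {f : ℝ → ℝ} {S C : ℝ} (hS : 0 < S)
    (h : ∀ s ∈ Icc 0 S, |derivWithin f (Icc 0 S) s| ≤ C) :
    IsBoundedUnder (· ≤ ·) (𝓝[>] 0) (norm ∘ deriv f) := by
  refine isBoundedUnder_of_eventually_le (a := C) ?_
  filter_upwards [Ioo_mem_nhdsGT hS] with x hx
  rw [Function.comp_apply, ← derivWithin_of_mem_nhds (Icc_mem_nhds hx.1 hx.2)]
  exact h x (Ioo_subset_Icc_self hx)

structure IsDegenerateHeatSolution (S T : ℝ) (ρ a : ℝ → ℝ) (w : ℝ → ℝ → ℝ) : Prop where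
  continuousOn : ContinuousOn (fun p : ℝ × ℝ => w p.1 p.2) (Icc 0 S ×ˢ Ioc 0 T)
  bdd_derivWithin_space : ∃ C, ∀ s ∈ Icc 0 S, ∀ t ∈ Ioc 0 T,
    |derivWithin (fun x => w x t) (Icc 0 S) s| ≤ C
  differentiableWithinAt_time : ∀ s ∈ Icc 0 S, ∀ t ∈ Ioc 0 T,
    DifferentiableWithinAt ℝ (fun τ => w s τ) (Ioc 0 T) t
  continuousOn_derivWithin_time : ContinuousOn
    (fun p : ℝ × ℝ => derivWithin (fun τ => w p.1 τ) (Ioc 0 T) p.2) (Icc 0 S ×ˢ Ioc 0 T)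
  contDiffOn_space : ∀ t ∈ Ioc 0 T, ContDiffOn ℝ 2 (fun x => w x t) (Ioo 0 S)
  pde : ∀ s ∈ Ioo 0 S, ∀ t ∈ Ioc 0 T,
    ρ s * derivWithin (fun τ => w s τ) (Ioc 0 T) t
      = deriv (fun x => ρ x * a x) s * deriv (fun x => w x t) s
        + ρ s * a s * deriv (deriv (fun x => w x t)) s

namespace IsDegenerateHeatSolution

variable {S T : ℝ} {ρ a : ℝ → ℝ} {w : ℝ → ℝ → ℝ}

theorem le_add_mul_of_le_on_parabolic_boundary (hw : IsDegenerateHeatSolution S T ρ a w)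
    (hc : DegenerateCoefficients S ρ a) {τ δ M : ℝ} (hτ : 0 < τ) (hδ : 0 < δ)
    (hbot : ∀ s ∈ Icc 0 S, w s τ ≤ M) (hright : ∀ t ∈ Icc τ T, w S t ≤ M) :
    ∀ s ∈ Icc 0 S, ∀ t ∈ Icc τ T, w s t ≤ M + δ * (t - τ) := by
  intro s hs t ht
  have hsub : Icc 0 S ×ˢ Icc τ T ⊆ Icc 0 S ×ˢ Ioc 0 T :=
    prod_mono_right fun t ht => ⟨hτ.trans_le ht.1, ht.2⟩
  have hvcont : ContinuousOn (fun p : ℝ × ℝ => w p.1 p.2 - δ * (p.2 - τ)) (Icc 0 S ×ˢ Icc τ T) :=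
    (hw.continuousOn.mono hsub).sub (by fun_prop)
  obtain ⟨⟨s₀, t₀⟩, ⟨hs₀, ht₀⟩, hmax⟩ :=
    (isCompact_Icc.prod isCompact_Icc).exists_isMaxOn ⟨(s, t), hs, ht⟩ hvcont
  have hv : ∀ x ∈ Icc 0 S, ∀ y ∈ Icc τ T,
      w x y - δ * (y - τ) ≤ w s₀ t₀ - δ * (t₀ - τ) := fun x hx y hy => hmax (a := (x, y)) ⟨hx, hy⟩
  suffices w s₀ t₀ - δ * (t₀ - τ) ≤ M by linarith [hv s hs t ht]
  by_contra! hM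
  have ht₀τ : τ < t₀ := ht₀.1.lt_of_ne (by rintro rfl; linarith [hbot s₀ hs₀])
  have hs₀S : s₀ < S := hs₀.2.lt_of_ne (by rintro rfl; nlinarith [hright t₀ ht₀])
  have ht₀' : t₀ ∈ Ioc 0 T := (hsub ⟨hs₀, ht₀⟩).2
  have hδle : δ ≤ derivWithin (fun t => w s₀ t) (Ioc 0 T) t₀ := by
    have hderiv := (((hw.differentiableWithinAt_time s₀ hs₀ t₀ ht₀').hasDerivWithinAt.mono
      fun y (hy : y ∈ Ioo τ t₀) => ⟨hτ.trans hy.1, hy.2.le.trans ht₀.2⟩).sub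
      ((hasDerivWithinAt_id t₀ _).const_mul δ))
    have := hderiv.nonneg_of_isMaxOn_Ioo ht₀τ fun y hy => by
      show w s₀ y - δ * y ≤ w s₀ t₀ - δ * t₀
      linarith [hv s₀ hs₀ y ⟨hy.1.le, hy.2.le.trans ht₀.2⟩]
    linarith
  obtain ⟨C, hC⟩ := hw.bdd_derivWithin_space
  have hslice : ContinuousOn (fun x => w x t₀) (Icc 0 S) :=
    hw.continuousOn.uncurry_right (f := w) t₀ ht₀'
  have hslice_dt : ContinuousWithinAt (fun x => derivWithin (fun t => w x t) (Ioc 0 T) t₀)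
      (Icc 0 S) s₀ :=
    hw.continuousOn_derivWithin_time.uncurry_right
      (f := fun x t => derivWithin (fun τ => w x τ) (Ioc 0 T) t) t₀ ht₀' s₀ hs₀
  have hslice_max : IsMaxOn (fun x => w x t₀) (Icc 0 S) s₀ := fun x hx => by
    show w x t₀ ≤ w s₀ t₀
    linarith [hv x hx t₀ ht₀]
  exact hc.not_isMaxOn_of_flux_deriv_pos ⟨hs₀.1, hs₀S⟩ hslice (hw.contDiffOn_space t₀ ht₀')
    (isBoundedUnder_norm_deriv_nhdsGT (hs₀.1.trans_lt hs₀S) fun x hx => hC x hx t₀ ht₀')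
    (fun x hx => hw.pde x hx t₀ ht₀') hslice_dt (hδ.trans_le hδle) hslice_max

theorem le_of_le_on_parabolic_boundary (hw : IsDegenerateHeatSolution S T ρ a w)
    (hc : DegenerateCoefficients S ρ a) {τ M : ℝ} (hτ : 0 < τ)
    (hbot : ∀ s ∈ Icc 0 S, w s τ ≤ M) (hright : ∀ t ∈ Icc τ T, w S t ≤ M) :
    ∀ s ∈ Icc 0 S, ∀ t ∈ Icc τ T, w s t ≤ M := by
  intro s hs t ht
  have hlim : Tendsto (fun δ : ℝ => M + δ * (t - τ)) (𝓝[>] 0) (𝓝 M) :=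
    tendsto_nhdsWithin_of_tendsto_nhds <| Continuous.tendsto' (by fun_prop) 0 M (by simp)
  refine ge_of_tendsto hlim ?_
  filter_upwards [self_mem_nhdsWithin] with δ hδ
  exact hw.le_add_mul_of_le_on_parabolic_boundary hc hτ hδ hbot hright s hs t ht

end IsDegenerateHeatSolution

theorem stmt15_general (S T ε₀ : ℝ) (hS : 0 < S)
    (hε : 0 < ε₀)
    (ρ a : ℝ → ℝ)
    (hρcont : ContinuousOn ρ (Set.Icc 0 S))
    (hacont : ContinuousOn a (Set.Icc 0 S))
    (hρC1 : ContDiffOn ℝ 1 ρ (Set.Ioo 0 S))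
    (haC1 : ContDiffOn ℝ 1 a (Set.Ioo 0 S))
    (hρ0 : ρ 0 = 0)
    (hρpos : ∀ s ∈ Set.Ioc (0:ℝ) S, 0 < ρ s)
    (hapos : ∀ s ∈ Set.Ioc (0:ℝ) S, 0 < a s)
    (w : ℝ → ℝ → ℝ)
    (hwcont : ContinuousOn (fun p : ℝ × ℝ => w p.1 p.2) (Set.Icc 0 S ×ˢ Set.Ioc 0 T))
    -- boundedness of ∂ₛ w on `[0, S] × (0, T]`
    (hDsbdd : ∃ C, ∀ s ∈ Set.Icc (0:ℝ) S, ∀ t ∈ Set.Ioc (0:ℝ) T,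
      |derivWithin (fun x => w x t) (Set.Icc 0 S) s| ≤ C)
    -- existence of the partial derivative ∂ₜ w on `[0, S] × (0, T]`
    (hDt : ∀ s ∈ Set.Icc (0:ℝ) S, ∀ t ∈ Set.Ioc (0:ℝ) T,
      DifferentiableWithinAt ℝ (fun τ => w s τ) (Set.Ioc 0 T) t)
    -- continuity of ∂ₜ w on `[0, S] × (0, T]`
    (hDtcont : ContinuousOn
      (fun p : ℝ × ℝ => derivWithin (fun τ => w p.1 τ) (Set.Ioc 0 T) p.2)
      (Set.Icc 0 S ×ˢ Set.Ioc 0 T))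
    -- `w` is twice continuously differentiable in `s` on `(0, S) × (0, T]`
    (hC2 : ∀ t ∈ Set.Ioc (0:ℝ) T, ContDiffOn ℝ 2 (fun x => w x t) (Set.Ioo 0 S))
    -- the degenerate parabolic equation `ρ ∂ₜ w = (ρ a)' ∂ₛ w + ρ a ∂ₛ² w`
    (hpde : ∀ s ∈ Set.Ioo (0:ℝ) S, ∀ t ∈ Set.Ioc (0:ℝ) T,
      ρ s * derivWithin (fun τ => w s τ) (Set.Ioc 0 T) t
        = deriv (fun x => ρ x * a x) s * deriv (fun x => w x t) s
          + ρ s * a s * deriv (deriv (fun x => w x t)) s)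
    -- (i): `w ≤ 0` on the corner `[0, ε₀] × (0, ε₀]`
    (hcorner : ∀ s ∈ Set.Icc (0:ℝ) ε₀, ∀ t ∈ Set.Ioc (0:ℝ) ε₀, w s t ≤ 0)
    -- (ii): `w ≤ 0` on the outer boundary `s = S`
    (houter : ∀ t ∈ Set.Ioc (0:ℝ) T, w S t ≤ 0)
    -- (iii): `w(s, t) → 0` as `t → 0⁺`, uniformly for `s ∈ [ε₀, S]`
    (hinit : TendstoUniformlyOn (fun t s => w s t) 0
      (nhdsWithin 0 (Set.Ioi 0)) (Set.Icc ε₀ S)) :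
    ∀ s ∈ Set.Icc (0:ℝ) S, ∀ t ∈ Set.Ioc (0:ℝ) T, w s t ≤ 0 := by
  intro s hs t ht
  have hc : DegenerateCoefficients S ρ a :=
    { weight_zero := hρ0
      continuousWithinAt_weight :=
        (hρcont 0 ⟨le_rfl, hS.le⟩).mono_of_mem_nhdsWithin (Icc_mem_nhdsGT hS)
      continuousWithinAt_coeff :=
        (hacont 0 ⟨le_rfl, hS.le⟩).mono_of_mem_nhdsWithin (Icc_mem_nhdsGT hS)
      contDiffOn_weight := hρC1
      contDiffOn_coeff := haC1
      weight_pos := fun x hx => hρpos x (Ioo_subset_Ioc_self hx)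
      coeff_pos := fun x hx => hapos x (Ioo_subset_Ioc_self hx) }
  have hw : IsDegenerateHeatSolution S T ρ a w := ⟨hwcont, hDsbdd, hDt, hDtcont, hC2, hpde⟩
  refine le_of_forall_pos_le_add fun ε hεpos => ?_
  obtain ⟨τ, hτinit, hτ⟩ := ((Metric.tendstoUniformlyOn_iff.mp hinit ε hεpos).and
    (Ioo_mem_nhdsGT (lt_min hε ht.1))).exists
  have hbot : ∀ x ∈ Icc 0 S, w x τ ≤ ε := by
    intro x hx
    rcases le_total x ε₀ with hxε | hxε
    · exact (hcorner x ⟨hx.1, hxε⟩ τ ⟨hτ.1, hτ.2.le.trans (min_le_left _ _)⟩).trans hεpos.le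
    · have hdist := hτinit x ⟨hxε, hx.2⟩
      rw [Pi.zero_apply, dist_comm, Real.dist_0_eq_abs] at hdist
      exact (le_abs_self _).trans hdist.le
  have hright : ∀ t' ∈ Icc τ T, w S t' ≤ ε := fun t' ht' =>
    (houter t' ⟨hτ.1.trans_le ht'.1, ht'.2⟩).trans hεpos.le
  simpa using hw.le_of_le_on_parabolic_boundary hc hτ.1 hbot hright s hs t
    ⟨(hτ.2.trans_le (min_le_right _ _)).le, ht.2⟩

/-- a weighted parabolic maximum principle on `[0, S] × (0, T]` for the
degenerate divergence-form operator `ρ ∂ₜ w = (ρ a)' ∂ₛ w + ρ a ∂ₛ² w`, where the weight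
`ρ` vanishes at the left endpoint `s = 0`.  Together with nonpositivity of `w` near the
corner `[0, ε₀] × (0, ε₀]`, nonpositivity at the right boundary `s = S`, and uniform
vanishing of `w(s, t)` as `t → 0⁺` for `s ∈ [ε₀, S]`, it follows that `w ≤ 0`
everywhere on `[0, S] × (0, T]`. -/
theorem stmt15 (S T ε₀ : ℝ) (hS : 0 < S) (hT : 0 < T)
    (hε : 0 < ε₀) (hεmin : ε₀ < min S T)
    (ρ a : ℝ → ℝ)
    (hρcont : ContinuousOn ρ (Set.Icc 0 S))
    (hacont : ContinuousOn a (Set.Icc 0 S))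
    (hρC1 : ContDiffOn ℝ 1 ρ (Set.Ioo 0 S))
    (haC1 : ContDiffOn ℝ 1 a (Set.Ioo 0 S))
    (hρ0 : ρ 0 = 0)
    (hρpos : ∀ s ∈ Set.Ioc (0:ℝ) S, 0 < ρ s)
    (hapos : ∀ s ∈ Set.Ioc (0:ℝ) S, 0 < a s)
    (w : ℝ → ℝ → ℝ)
    (hwcont : ContinuousOn (fun p : ℝ × ℝ => w p.1 p.2) (Set.Icc 0 S ×ˢ Set.Ioc 0 T))
    (hwbdd : ∃ C, ∀ s ∈ Set.Icc (0:ℝ) S, ∀ t ∈ Set.Ioc (0:ℝ) T, |w s t| ≤ C)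
    -- existence of the partial derivative ∂ₛ w on `[0, S] × (0, T]`
    (hDs : ∀ s ∈ Set.Icc (0:ℝ) S, ∀ t ∈ Set.Ioc (0:ℝ) T,
      DifferentiableWithinAt ℝ (fun x => w x t) (Set.Icc 0 S) s)
    -- continuity of ∂ₛ w on `[0, S] × (0, T]`
    (hDscont : ContinuousOn
      (fun p : ℝ × ℝ => derivWithin (fun x => w x p.2) (Set.Icc 0 S) p.1)
      (Set.Icc 0 S ×ˢ Set.Ioc 0 T))
    -- boundedness of ∂ₛ w on `[0, S] × (0, T]`
    (hDsbdd : ∃ C, ∀ s ∈ Set.Icc (0:ℝ) S, ∀ t ∈ Set.Ioc (0:ℝ) T,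
      |derivWithin (fun x => w x t) (Set.Icc 0 S) s| ≤ C)
    -- existence of the partial derivative ∂ₜ w on `[0, S] × (0, T]`
    (hDt : ∀ s ∈ Set.Icc (0:ℝ) S, ∀ t ∈ Set.Ioc (0:ℝ) T,
      DifferentiableWithinAt ℝ (fun τ => w s τ) (Set.Ioc 0 T) t)
    -- continuity of ∂ₜ w on `[0, S] × (0, T]`
    (hDtcont : ContinuousOn
      (fun p : ℝ × ℝ => derivWithin (fun τ => w p.1 τ) (Set.Ioc 0 T) p.2)
      (Set.Icc 0 S ×ˢ Set.Ioc 0 T))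
    -- boundedness of ∂ₜ w on `[0, S] × (0, T]`
    (hDtbdd : ∃ C, ∀ s ∈ Set.Icc (0:ℝ) S, ∀ t ∈ Set.Ioc (0:ℝ) T,
      |derivWithin (fun τ => w s τ) (Set.Ioc 0 T) t| ≤ C)
    -- `w` is twice continuously differentiable in `s` on `(0, S) × (0, T]`
    (hC2 : ∀ t ∈ Set.Ioc (0:ℝ) T, ContDiffOn ℝ 2 (fun x => w x t) (Set.Ioo 0 S))
    -- the degenerate parabolic equation `ρ ∂ₜ w = (ρ a)' ∂ₛ w + ρ a ∂ₛ² w`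
    (hpde : ∀ s ∈ Set.Ioo (0:ℝ) S, ∀ t ∈ Set.Ioc (0:ℝ) T,
      ρ s * derivWithin (fun τ => w s τ) (Set.Ioc 0 T) t
        = deriv (fun x => ρ x * a x) s * deriv (fun x => w x t) s
          + ρ s * a s * deriv (deriv (fun x => w x t)) s)
    -- (i): `w ≤ 0` on the corner `[0, ε₀] × (0, ε₀]`
    (hcorner : ∀ s ∈ Set.Icc (0:ℝ) ε₀, ∀ t ∈ Set.Ioc (0:ℝ) ε₀, w s t ≤ 0)
    -- (ii): `w ≤ 0` on the outer boundary `s = S`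
    (houter : ∀ t ∈ Set.Ioc (0:ℝ) T, w S t ≤ 0)
    -- (iii): `w(s, t) → 0` as `t → 0⁺`, uniformly for `s ∈ [ε₀, S]`
    (hinit : TendstoUniformlyOn (fun t s => w s t) 0
      (nhdsWithin 0 (Set.Ioi 0)) (Set.Icc ε₀ S)) :
    ∀ s ∈ Set.Icc (0:ℝ) S, ∀ t ∈ Set.Ioc (0:ℝ) T, w s t ≤ 0 :=
  stmt15_general S T ε₀ hS hε ρ a hρcont hacont hρC1 haC1 hρ0 hρpos hapos w hwcont hDsbdd hDt
    hDtcont hC2 hpde hcorner houter hinit
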